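/- Let Ω = {ω_1, …, ω_12} and let 𝓘 = { {ω_1, ω_2, ω_3, ω_4}, {ω_4, ω_5, ω_6, ω_7}, {ω_7, ω_8, ω_9, ω_10}, {ω_10, ω_11, ω_12, ω_1}, {ω_2, ω_5, ω_8, ω_11} }. If P is a partition of Ω into exactly 4 nonempty blocks satisfying the 𝒥-minimal compatibility condition with respect to 𝓘, and no member of 𝓘 is contained in a single block of P, then P is one of the two partitions: {{ω_2, ω_6, ω_10}, {ω_5, ω_1, ω_9}, {ω_8, ω_4, ω_12}, {ω_11, ω_3, ω_7}} or {{ω_2, ω_7, ω_12}, {ω_5, ω_3, ω_10}, {ω_8, ω_1, ω_6}, {ω_11, ω_4, ω_9}}. -/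

import Mathlib

/-- `P` is a partition of `Ω` into exactly `r` nonempty pairwise disjoint blocks
whose union is `Ω`. -/
def isPartitionInto {Ω : Type*} [Fintype Ω] [DecidableEq Ω]
    (P : Finset (Finset Ω)) (r : ℕ) : Prop :=
  P.card = r ∧ (∀ B ∈ P, B.Nonempty) ∧
    (∀ B ∈ P, ∀ C ∈ P, B ≠ C → Disjoint B C) ∧ P.biUnion id = Finset.univ

/-- The 𝒥-minimal compatibility condition: every member `S` of `I` is either contained
in a single block of `P`, or its elements lie in pairwise distinct blocks of `P`. -/
def JCompat {Ω : Type*} [DecidableEq Ω] (P : Finset (Finset Ω))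
    (I : Finset (Finset Ω)) : Prop :=
  ∀ S ∈ I, (∃ B ∈ P, S ⊆ B) ∨
    (∀ x ∈ S, ∀ y ∈ S, ∀ B ∈ P, x ∈ B → y ∈ B → x = y)

/-- The collection 𝓘 of `4`-element subsets of `Fin 12`, where `ω_i` corresponds to
`i - 1 : Fin 12`. -/
def I12 : Finset (Finset (Fin 12)) :=
  {{0,1,2,3},{3,4,5,6},{6,7,8,9},{9,10,11,0},{1,4,7,10}}

/-!
A partition into `r` blocks is the fibre partition of a colouring `c : Ω → Fin r`, and the
hypotheses say that `c` is injective on every member of `𝓘`. Permute the colours so that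
`ω₁, …, ω₄` get `0, …, 3`. Then `ω₅` has colour `0` or `2`, and when it is `0`, `ω₇` has colour
`1` or `2`; in each of these three cases the four quadruples determine the remaining colours or
leave none, and exactly the two colourings of the two listed partitions survive.
-/

open Finset

section Partitions

variable {Ω : Type*} [Fintype Ω] [DecidableEq Ω]

def fiberPartition {β : Type*} [DecidableEq β] (c : Ω → β) : Finset (Finset Ω) :=
  univ.image fun x => univ.filter fun y => c y = c x

theorem fiberPartition_comp_of_injective {β γ : Type*} [DecidableEq β] [DecidableEq γ]
    (c : Ω → β) {σ : β → γ} (hσ : Function.Injective σ) :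
    fiberPartition (σ ∘ c) = fiberPartition c := by
  simp only [fiberPartition, Function.comp_apply, hσ.eq_iff]

theorem injOn_of_jCompat_fiberPartition {β : Type*} [DecidableEq β] {c : Ω → β}
    {I : Finset (Finset Ω)} (hcompat : JCompat (fiberPartition c) I)
    (hblock : ∀ S ∈ I, ∀ B ∈ fiberPartition c, ¬ S ⊆ B) (S : Finset Ω) (hS : S ∈ I) :
    Set.InjOn c S := by
  intro x hx y hy hxy
  have hB : (univ.filter fun z => c z = c x) ∈ fiberPartition c := mem_image_of_mem _ (mem_univ x)
  rcases hcompat S hS with ⟨B, hBP, hSB⟩ | hrainbow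
  · exact absurd hSB (hblock S hS B hBP)
  · exact hrainbow x hx y hy _ hB (by simp) (by simp [hxy])

variable {P : Finset (Finset Ω)} {r : ℕ}

theorem isPartitionInto.eq_of_mem (hP : isPartitionInto P r) {B C : Finset Ω} (hB : B ∈ P)
    (hC : C ∈ P) {x : Ω} (hxB : x ∈ B) (hxC : x ∈ C) : B = C := by
  by_contra hBC
  exact disjoint_left.mp (hP.2.2.1 B hB C hC hBC) hxB hxC

theorem isPartitionInto.exists_eq_fiberPartition (hP : isPartitionInto P r) :
    ∃ c : Ω → Fin r, P = fiberPartition c := by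
  have hcover : ∀ x, ∃ B ∈ P, x ∈ B := fun x => by
    simpa using (hP.2.2.2 ▸ mem_univ x : x ∈ P.biUnion id)
  choose blk hblkP hmem using hcover
  let e := equivFinOfCardEq hP.1
  refine ⟨fun x => e ⟨blk x, hblkP x⟩, ?_⟩
  have hblk_eq : ∀ {B x}, B ∈ P → x ∈ B → blk x = B := fun hB hx =>
    hP.eq_of_mem (hblkP _) hB (hmem _) hx
  have hfiber : ∀ x, (univ.filter fun y => e ⟨blk y, hblkP y⟩ = e ⟨blk x, hblkP x⟩) = blk x := by
    intro x
    ext y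
    simp only [mem_filter, mem_univ, true_and, e.apply_eq_iff_eq, Subtype.mk.injEq]
    exact ⟨fun h => h ▸ hmem y, fun hy => hblk_eq (hblkP x) hy⟩
  ext B
  simp only [fiberPartition, mem_image, mem_univ, true_and, hfiber]
  refine ⟨fun hB => ?_, fun ⟨x, hx⟩ => hx ▸ hblkP x⟩
  obtain ⟨x, hx⟩ := hP.2.1 B hB
  exact ⟨x, hblk_eq hB hx⟩

end Partitions

theorem exists_perm_apply_comp_eq {α β : Type*} [Finite β] (c : α → β) (f : β → α)
    (h : Function.Injective (c ∘ f)) : ∃ σ : Equiv.Perm β, ∀ b, σ (c (f b)) = b :=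
  ⟨(Equiv.ofBijective _ (Finite.injective_iff_bijective.mp h)).symm,
    Equiv.ofBijective_symm_apply_apply _ _⟩

theorem eq_of_injOn_I12 (c : Fin 12 → Fin 4) (h0 : c 0 = 0) (h1 : c 1 = 1) (h2 : c 2 = 2)
    (h3 : c 3 = 3) (hc : ∀ S ∈ I12, Set.InjOn c S) :
    c = ![0, 1, 2, 3, 0, 1, 2, 3, 0, 1, 2, 3] ∨ c = ![0, 1, 2, 3, 2, 0, 1, 0, 3, 2, 3, 1] := by
  simp only [I12, Fin.isValue, mem_insert, mem_singleton, forall_eq_or_imp, coe_insert,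
    coe_singleton, Set.mem_insert_iff, zero_ne_one, Fin.reduceEq, Set.mem_singleton_iff, or_self,
    not_false_eq_true, Set.injOn_insert, Set.injOn_singleton, Set.image_singleton, true_and,
    Set.mem_image, exists_eq_or_imp, existsAndEq, not_or, forall_eq] at hc
  obtain h4 | h4 : c 4 = 0 ∨ c 4 = 2 := by omega
  · obtain h6 | h6 : c 6 = 1 ∨ c 6 = 2 := by omega
    · -- `c 7` and `c 10` fill `{2, 3}`, which leaves no colour for `c 9`
      exfalso
      omega
    · obtain ⟨h5, h7, h8, h9, h10, h11⟩ :
          c 5 = 1 ∧ c 7 = 3 ∧ c 8 = 0 ∧ c 9 = 1 ∧ c 10 = 2 ∧ c 11 = 3 := by omega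
      left
      funext x
      fin_cases x <;> assumption
  · obtain ⟨h5, h6, h7, h8, h9, h10, h11⟩ :
        c 5 = 0 ∧ c 6 = 1 ∧ c 7 = 0 ∧ c 8 = 3 ∧ c 9 = 2 ∧ c 10 = 3 ∧ c 11 = 1 := by omega
    right
    funext x
    fin_cases x <;> assumption

theorem stmt9 (P : Finset (Finset (Fin 12)))
    (hP : isPartitionInto P 4) (hcompat : JCompat P I12)
    (hblock : ∀ S ∈ I12, ∀ B ∈ P, ¬ S ⊆ B) :
    P = {{1,5,9},{4,0,8},{7,3,11},{10,2,6}} ∨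
    P = {{1,6,11},{4,2,9},{7,0,5},{10,3,8}} := by
  obtain ⟨c, rfl⟩ := hP.exists_eq_fiberPartition
  have hinj := injOn_of_jCompat_fiberPartition hcompat hblock
  obtain ⟨σ, hσ⟩ := exists_perm_apply_comp_eq c (Fin.castLE (by norm_num) : Fin 4 → Fin 12)
    (Set.injOn_univ.mp ((hinj {0, 1, 2, 3} (by decide)).comp (Fin.castLE_injective _).injOn
      fun i _ => by fin_cases i <;> decide))
  rw [← fiberPartition_comp_of_injective c σ.injective]
  rcases eq_of_injOn_I12 (σ ∘ c) (hσ 0) (hσ 1) (hσ 2) (hσ 3)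
    (fun S hS => σ.injective.injOn.comp (hinj S hS) (Set.mapsTo_univ _ _)) with h | h <;>
    rw [h]
  · left; decide
  · right; decide
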